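/- Let d ≥ p ≥ 2, k > p, s ≥ k·d + 1, and let a⃗ = (a_1,…,a_p) be a sequence of positive integers with a_1+⋯+a_p = k. Let H ⊆ binom([n],k) be a hypergraph that contains no (a⃗,d)-Δ-system as a subfamily, and let H* be an s-homogeneous subgraph of H with intersection pattern J. Suppose r(J) = k−1 and J contains at most k−2 sets of size k−1. Then ω_H(E) ≥ k/(k−1) for every E ∈ H*. -/

import Mathlib

open Finset

/-- A Δ-system (sunflower) with center `C`: a family of at least two sets such that
the intersection of any two distinct members equals `C`. -/
def IsDeltaSystem (D : Finset (Finset ℕ)) (C : Finset ℕ) : Prop :=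
  2 ≤ D.card ∧ ∀ A ∈ D, ∀ B ∈ D, A ≠ B → A ∩ B = C

/-- `A : Fin p → Finset ℕ` is an `a⃗`-partition of the set `E`. -/
def IsAPartition (p : ℕ) (a : Fin p → ℕ) (A : Fin p → Finset ℕ) (E : Finset ℕ) : Prop :=
  (∀ i, (A i).card = a i) ∧ (∀ i j, i ≠ j → Disjoint (A i) (A j)) ∧
    Finset.univ.sup A = E

/-- A semi-`(a⃗,b⃗)`-Δ-system with host `E0` and petals `E i j` (`i ∈ [p]`, `j ∈ [b i]`):
for some `a⃗`-partition `E0 = A 1 ∪ ⋯ ∪ A p`, for each `i` the family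
`{E0, E i 1, …, E i (b i)}` is a Δ-system with center `E0 \ A i`. -/
def IsSemiSystem (p : ℕ) (a b : Fin p → ℕ) (E0 : Finset ℕ)
    (E : (i : Fin p) → Fin (b i) → Finset ℕ) : Prop :=
  ∃ A : Fin p → Finset ℕ, IsAPartition p a A E0 ∧
    ∀ i : Fin p,
      (∀ j, E i j ≠ E0) ∧ Function.Injective (E i) ∧
      (∀ j, E0 ∩ E i j = E0 \ A i) ∧
      (∀ j j', j ≠ j' → E i j ∩ E i j' = E0 \ A i)

/-- An `(a⃗,b⃗)`-Δ-system: a semi-`(a⃗,b⃗)`-Δ-system in which the sets `E i j \ E0`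
are pairwise disjoint. -/
def IsABSystem (p : ℕ) (a b : Fin p → ℕ) (E0 : Finset ℕ)
    (E : (i : Fin p) → Fin (b i) → Finset ℕ) : Prop :=
  IsSemiSystem p a b E0 E ∧
    ∀ x y : (i : Fin p) × Fin (b i), x ≠ y →
      Disjoint (E x.1 x.2 \ E0) (E y.1 y.2 \ E0)

/-- The family described by the predicate `Fam` contains an `(a⃗,d)`-Δ-system, i.e. an
`(a⃗,b⃗)`-Δ-system with `b` a sequence of positive integers summing to `d`, all of whose
members belong to `Fam`. -/
def FamContainsADSystem (p : ℕ) (a : Fin p → ℕ) (d : ℕ) (Fam : Finset ℕ → Prop) : Prop :=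
  ∃ b : Fin p → ℕ, (∀ i, 0 < b i) ∧ (∑ i, b i) = d ∧
    ∃ E0, Fam E0 ∧ ∃ E : (i : Fin p) → Fin (b i) → Finset ℕ,
      (∀ i j, Fam (E i j)) ∧ IsABSystem p a b E0 E

/-- The finite family `H` contains an `(a⃗,d)`-Δ-system as a subfamily. -/
def ContainsADSystem (p : ℕ) (a : Fin p → ℕ) (d : ℕ) (H : Finset (Finset ℕ)) : Prop :=
  FamContainsADSystem p a d (· ∈ H)

/-- A family is `d`-wise-intersecting if every `d` of its members have a common element. -/
def WiseIntersecting (d : ℕ) (F : Finset (Finset ℕ)) : Prop :=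
  ∀ f : Fin d → Finset ℕ, (∀ i, f i ∈ F) → ∃ v, ∀ i, v ∈ f i

/-- Non-trivial `d`-wise-intersecting: `d`-wise-intersecting, but no element lies in
all members. -/
def NonTrivialWiseIntersecting (d : ℕ) (F : Finset (Finset ℕ)) : Prop :=
  WiseIntersecting d F ∧ ¬ ∃ v, ∀ A ∈ F, v ∈ A

/-- A family is intersecting if every two members have a nonempty intersection. -/
def IntersectingFam (F : Finset (Finset ℕ)) : Prop :=
  ∀ A ∈ F, ∀ B ∈ F, (A ∩ B).Nonempty

/-- Non-trivial intersecting: intersecting, but no element lies in all members. -/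
def NonTrivialIntersectingFam (F : Finset (Finset ℕ)) : Prop :=
  IntersectingFam F ∧ ¬ ∃ v, ∀ A ∈ F, v ∈ A

/-- The intersection structure `I(E,H) = {E ∩ E' : E' ∈ H \ {E}}`. -/
def interStruct (H : Finset (Finset ℕ)) (E : Finset ℕ) : Finset (Finset ℕ) :=
  (H.erase E).image (fun E' => E ∩ E')

/-- The projection `Π(S) = {i : S ∩ V i ≠ ∅}` with respect to the parts `V`. -/
def proj {k : ℕ} (V : Fin k → Finset ℕ) (S : Finset ℕ) : Finset (Fin k) :=
  Finset.univ.filter (fun i => (S ∩ V i).Nonempty)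

/-- `H ⊆ binom([n],k)` is `s`-homogeneous with intersection pattern
`J ⊆ 2^[k] ∖ {[k]}`: `H` is `k`-partite (with parts partitioning `[n] = Icc 1 n`),
`Π(I(E,H)) = J` for all `E ∈ H`, `J` is closed under intersection, and every set of
`I(E,H)` is the center of a Δ-system of size `s` formed by edges of `H` containing `E`. -/
def IsHomogeneousWith (n k s : ℕ) (H : Finset (Finset ℕ)) (J : Finset (Finset (Fin k))) :
    Prop :=
  ∃ V : Fin k → Finset ℕ,
    (∀ i j, i ≠ j → Disjoint (V i) (V j)) ∧
    Finset.univ.sup V = Finset.Icc 1 n ∧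
    (∀ E ∈ H, ∀ i, (E ∩ V i).card = 1) ∧
    (Finset.univ : Finset (Fin k)) ∉ J ∧
    (∀ E ∈ H, (interStruct H E).image (proj V) = J) ∧
    (∀ A ∈ J, ∀ B ∈ J, A ∩ B ∈ J) ∧
    (∀ E ∈ H, ∀ C ∈ interStruct H E,
      ∃ D : Finset (Finset ℕ), D ⊆ H ∧ E ∈ D ∧ D.card = s ∧ IsDeltaSystem D C)

/-- The rank `r(J) = min{|A| : A ⊆ [k], A ∉ J, no B ∈ J contains A}`. -/
noncomputable def patternRank {k : ℕ} (J : Finset (Finset (Fin k))) : ℕ :=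
  sInf {m : ℕ | ∃ A : Finset (Fin k), A ∉ J ∧ (∀ B ∈ J, ¬ A ⊆ B) ∧ A.card = m}

/-- The `i`-th shadow of a `k`-uniform family: all `(k-i)`-subsets of its edges. -/
def iShadow (k i : ℕ) (H : Finset (Finset ℕ)) : Finset (Finset ℕ) :=
  H.biUnion (fun E => Finset.powersetCard (k - i) E)

/-- `deg_H(E')`: the number of edges of `H` containing `E'`. -/
def degSet (H : Finset (Finset ℕ)) (E' : Finset ℕ) : ℕ :=
  (H.filter (fun F => E' ⊆ F)).card

/-- The weight `ω_H(E) = Σ_{E' ⊆ E, |E'| = k-1} 1 / deg_H(E')`. -/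
noncomputable def weight (k : ℕ) (H : Finset (Finset ℕ)) (E : Finset ℕ) : ℝ :=
  ∑ E' ∈ Finset.powersetCard (k - 1) E, (1 : ℝ) / (degSet H E' : ℝ)

/-- `deg_H(uv)` for a 3-graph: the number of edges containing both `u` and `v`. -/
def deg2 (H : Finset (Finset ℕ)) (u v : ℕ) : ℕ :=
  (H.filter (fun A => u ∈ A ∧ v ∈ A)).card

/-!
Fix `E ∈ H*`, write `e x` for its vertex in part `x`, and let `I` be the set of indices `x` with
`[k] ∖ {x} ∉ J`; the bound on the coatoms of `J` gives `|I| ≥ 2`. Rank `k - 1` and closure under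
intersection put `[k] ∖ P` into `J` for every nonempty `P` meeting `I` in a number of indices
other than one, so every such `P` yields a sunflower of `s` edges through `E` with center
`E ∖ e(P)`. A vertex `w ∉ E` with `E - e x + w ∈ H` is a replacement for `x`, and
`deg(E - e x) = 1 + #replacements`.

If some `σ` indices of `I` have fewer than `σ - 1` replacements altogether, the corresponding
summands of `ω_H(E)` are at least `1/(σ - 1)` each and `ω_H(E) ≥ σ/(σ - 1) ≥ k/(k - 1)`.
Otherwise Hall's theorem matches all but one index of `I` to distinct replacements. Enough
matched indices go into parts of size one, whose petal is the edge `E - e x + w`; the other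
indices of `I` are spread over the larger parts, never exactly one per part, and their petals
are chosen greedily from the sunflowers with pairwise disjoint new vertices. This gives an
`(a⃗,d)`-Δ-system with host `E`, a contradiction. The spreading fails only when all parts have
size two and `|I|` is odd; then a replacement `w` for some `x ∈ I` serves a part `{x, t}` with
`t ∉ I` of another host: an edge that differs from `E` only in part `t` and avoids `w`.
-/

section Combinatorics

open Function

variable {ι α : Type*} [DecidableEq α]

theorem exists_pairwise_disjoint_card_eq [Fintype ι] (X : Finset α) (f : ι → ℕ)
    (hf : ∑ j, f j = #X) :
    ∃ P : ι → Finset α, (∀ j, P j ⊆ X ∧ #(P j) = f j) ∧ Pairwise (Disjoint on P) := by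
  classical
  suffices ∀ u : Finset ι, ∀ X : Finset α, ∑ j ∈ u, f j = #X → ∃ P : ι → Finset α,
      (∀ j, P j ⊆ X) ∧ (∀ j ∈ u, #(P j) = f j) ∧ (∀ j ∉ u, P j = ∅) ∧
        Pairwise (Disjoint on P) by
    obtain ⟨P, hPX, hPcard, -, hPdisj⟩ := this univ X hf
    exact ⟨P, fun j => ⟨hPX j, hPcard j (mem_univ j)⟩, hPdisj⟩
  intro u
  induction u using Finset.induction_on with
  | empty => exact fun X _ => ⟨fun _ => ∅, by simp, by simp, by simp, fun _ _ _ => by simp⟩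
  | insert j u hj ih =>
    intro X hX
    rw [sum_insert hj] at hX
    obtain ⟨Y, hYX, hY⟩ := exists_subset_card_eq (show f j ≤ #X by omega)
    obtain ⟨P, hPX, hPcard, hPempty, hPdisj⟩ :=
      ih (X \ Y) (by rw [card_sdiff_of_subset hYX]; omega)
    have hYP : ∀ i, Disjoint Y (P i) := fun i => disjoint_of_subset_right (hPX i) disjoint_sdiff
    refine ⟨update P j Y, fun i => ?_, fun i hi => ?_, fun i hi => ?_, fun i i' hii' => ?_⟩
    · rcases eq_or_ne i j with rfl | h
      · simpa using hYX
      · simpa [h] using (hPX i).trans sdiff_subset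
    · rcases mem_insert.mp hi with rfl | hi
      · simpa using hY
      · simpa [ne_of_mem_of_not_mem hi hj] using hPcard i hi
    · simp_all
    · simp only [onFun, update_apply]
      split_ifs with h h'
      · exact absurd (h.trans h'.symm) hii'
      · exact hYP i'
      · exact (hYP i).symm
      · exact hPdisj hii'

theorem Pairwise.disjoint_union {P Q : ι → Finset α} {X Y : Finset α} (hXY : Disjoint X Y)
    (hPX : ∀ j, P j ⊆ X) (hQY : ∀ j, Q j ⊆ Y) (hP : Pairwise (Disjoint on P))
    (hQ : Pairwise (Disjoint on Q)) : Pairwise (Disjoint on fun j => P j ∪ Q j) := by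
  intro i j hij
  simp only [onFun, disjoint_union_left, disjoint_union_right]
  exact ⟨⟨hP hij, (hXY.mono (hPX j) (hQY i)).symm⟩, hXY.mono (hPX i) (hQY j), hQ hij⟩

/-- Induction step of `exists_sum_eq_of_ne_one`: the share `x` of a part of size `m` leaves an
admissible remainder for the other parts (of total size `T`, allowing only even sums unless
`big`). -/
theorem exists_le_sub_ne_one {m T c : ℕ} (hm : 2 ≤ m) (hc : c ≤ m + T) (hc1 : c ≠ 1)
    {big : Prop} (hbig : big → 3 ≤ T) (hsmall : ¬ big → Even T) (hpar : Even c ∨ 3 ≤ m ∨ big) :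
    ∃ x ≤ m, x ≠ 1 ∧ x ≤ c ∧ c - x ≤ T ∧ c - x ≠ 1 ∧ (Even (c - x) ∨ big) := by
  by_cases h : big
  · have := hbig h
    by_cases hcT : c ≤ T
    · exact ⟨0, by omega, by omega, by omega, by omega, by omega, .inr h⟩
    by_cases h2 : 2 ≤ c - T
    · exact ⟨c - T, by omega, by omega, by omega, by omega, by omega, .inr h⟩
    · exact ⟨2, hm, by omega, by omega, by omega, by omega, .inr h⟩
  have hT := Nat.even_iff.mp (hsmall h)
  have hodd : c % 2 = 1 → 3 ≤ m := fun hc2 => by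
    rcases hpar with hc' | hm' | h'
    · exact absurd (Nat.even_iff.mp hc') (by omega)
    · exact hm'
    · exact absurd h' h
  simp only [Nat.even_iff]
  by_cases hcT : c ≤ T <;> by_cases hc2 : c % 2 = 0
  · exact ⟨0, by omega, by omega, by omega, by omega, by omega, .inl (by omega)⟩
  · exact ⟨3, hodd (by omega), by omega, by omega, by omega, by omega, .inl (by omega)⟩
  · exact ⟨c - T, by omega, by omega, by omega, by omega, by omega, .inl (by omega)⟩
  by_cases h2 : 2 ≤ c - T
  · exact ⟨c - T, by omega, by omega, by omega, by omega, by omega, .inl (by omega)⟩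
  · exact ⟨3, hodd (by omega), by omega, by omega, by omega, by omega, .inl (by omega)⟩

theorem exists_sum_eq_of_ne_one (a : ι → ℕ) (u : Finset ι) (hu : ∀ j ∈ u, 2 ≤ a j) :
    ∀ c ≤ ∑ j ∈ u, a j, c ≠ 1 → (Even c ∨ ∃ j ∈ u, 3 ≤ a j) →
      ∃ f : ι → ℕ, (∀ j, f j ≤ a j ∧ f j ≠ 1) ∧ (∀ j ∉ u, f j = 0) ∧ ∑ j ∈ u, f j = c := by
  classical
  induction u using Finset.induction_on with
  | empty => intro c hc hc1 _; exact ⟨0, by simp, by simp, by simp at hc ⊢; omega⟩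
  | insert j u hj ih =>
    intro c hc hc1 hpar
    rw [sum_insert hj] at hc
    have hu' : ∀ i ∈ u, 2 ≤ a i := fun i hi => hu i (mem_insert_of_mem hi)
    have hsmall : ¬ (∃ i ∈ u, 3 ≤ a i) → Even (∑ i ∈ u, a i) := fun h => by
      push Not at h
      rw [sum_congr rfl fun i hi => (by have := hu' i hi; have := h i hi; omega : a i = 2)]
      simp
    obtain ⟨x, hxa, hx1, hxc, hxT, hx1', hxpar⟩ := exists_le_sub_ne_one (hu j (mem_insert_self j u))
      hc hc1 (fun ⟨i, hi, hai⟩ => hai.trans (single_le_sum (fun _ _ => Nat.zero_le _) hi)) hsmall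
      (by
        rcases hpar with h | ⟨i, hi, hai⟩
        · exact .inl h
        · rcases mem_insert.mp hi with rfl | hi
          · exact .inr (.inl hai)
          · exact .inr (.inr ⟨i, hi, hai⟩))
    obtain ⟨f, hfa, hf0, hfsum⟩ := ih hu' (c - x) hxT hx1' hxpar
    refine ⟨update f j x, fun i => ?_, fun i hi => ?_, ?_⟩
    · rcases eq_or_ne i j with rfl | h
      · simpa using ⟨hxa, hx1⟩
      · simpa [h] using hfa i
    · rw [update_of_ne (by rintro rfl; exact hi (mem_insert_self _ u))]
      exact hf0 i fun h => hi (mem_insert_of_mem h)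
    · rw [sum_insert hj, update_self, sum_update_of_notMem hj, hfsum]
      omega

/-- Hall's condition for `t` with deficiency `c` is Hall's condition for `t` padded with `c`
common dummy points. -/
theorem card_le_card_biUnion_map_inl_union {u : Finset ι} {t : ι → Finset α} {c : ℕ}
    (h : ∀ s ⊆ u, #s ≤ #(s.biUnion t) + c) (s : Finset u) :
    #s ≤ #(s.biUnion fun x => (t x).map .inl ∪ (range c).map .inr) := by
  rcases s.eq_empty_or_nonempty with rfl | ⟨x₀, hx₀⟩
  · simp
  have hsub : ((s.map (.subtype _)).biUnion t).map .inl ∪ (range c).map .inr ⊆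
      s.biUnion fun x => (t x).map .inl ∪ (range c).map .inr := by
    intro z hz
    simp only [mem_union, mem_map, mem_biUnion, Embedding.subtype_apply] at hz
    rcases hz with ⟨y, ⟨x, ⟨x', hx', rfl⟩, hy⟩, rfl⟩ | ⟨m, hm, rfl⟩
    · exact mem_biUnion.mpr ⟨x', hx', mem_union_left _ (mem_map_of_mem _ hy)⟩
    · exact mem_biUnion.mpr ⟨x₀, hx₀, mem_union_right _ (mem_map_of_mem _ hm)⟩
  calc #s = #(s.map (.subtype _)) := (card_map _).symm
    _ ≤ #((s.map (.subtype _)).biUnion t) + c := h _ fun x hx => by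
        obtain ⟨x', -, rfl⟩ := mem_map.mp hx; exact x'.2
    _ = #(((s.map (.subtype _)).biUnion t).map .inl ∪ (range c).map .inr) := by
        rw [card_union_of_disjoint (disjoint_map_inl_map_inr _ _), card_map, card_map, card_range]
    _ ≤ _ := card_le_card hsub

/-- Hall's theorem with deficiency `c`. -/
theorem exists_injOn_of_card_le_card_biUnion_add [Nonempty α] (u : Finset ι) (t : ι → Finset α)
    (c : ℕ) (h : ∀ s ⊆ u, #s ≤ #(s.biUnion t) + c) :
    ∃ T ⊆ u, #u ≤ #T + c ∧ ∃ f : ι → α, Set.InjOn f T ∧ ∀ x ∈ T, f x ∈ t x := by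
  classical
  obtain ⟨g, hg, hgt⟩ := (all_card_le_biUnion_card_iff_existsInjective' _).mp
    (card_le_card_biUnion_map_inl_union h)
  have hgt' : ∀ x : u, (∃ y ∈ t x, g x = .inl y) ∨ ∃ m < c, g x = .inr m := fun x => by
    simpa [eq_comm] using hgt x
  set L : Finset u := univ.filter fun x => (g x).isLeft
  have hL : #u ≤ #L + c := by
    have hR : #(univ.filter fun x => ¬ (g x).isLeft) ≤ #(range c) := by
      refine card_le_card_of_injOn (fun x => (g x).elim (fun _ => c) id) (fun x hx => ?_) ?_
      · rcases hgt' x with ⟨y, -, e⟩ | ⟨m, hm, e⟩ <;> simp_all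
      · intro x hx x' hx' e
        rcases hgt' x with ⟨y, -, hy⟩ | ⟨m, -, hm⟩ <;> [simp_all; skip]
        rcases hgt' x' with ⟨y', -, hy'⟩ | ⟨m', -, hm'⟩ <;> [simp_all; skip]
        exact hg (by simp_all)
    have := card_filter_add_card_filter_not (s := (univ : Finset u)) fun x => (g x).isLeft
    rw [card_univ, Fintype.card_coe] at this
    rw [card_range] at hR
    change #L + _ = _ at this
    omega
  let f : ι → α := fun x => if hx : x ∈ u then (g ⟨x, hx⟩).elim id fun _ => Classical.arbitrary α
    else Classical.arbitrary α
  have hf : ∀ x ∈ L, g x = .inl (f x) ∧ f x ∈ t x := fun x hx => by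
    rcases hgt' x with ⟨y, hy, e⟩ | ⟨m, -, e⟩ <;> simp_all [f, L]
  refine ⟨L.map (.subtype _), fun x hx => ?_, by rwa [card_map], f, ?_, fun x hx => ?_⟩
  · obtain ⟨x', -, rfl⟩ := mem_map.mp hx; exact x'.2
  · intro z hz z' hz' e
    obtain ⟨x, hxL, rfl⟩ := mem_map.mp hz
    obtain ⟨x', hxL', rfl⟩ := mem_map.mp hz'
    exact congrArg Subtype.val (hg ((hf x hxL).1.trans (e ▸ (hf x' hxL').1.symm)))
  · obtain ⟨x', hxL, rfl⟩ := mem_map.mp hx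
    exact (hf x' hxL).2

end Combinatorics

section DeltaSystems

open Function

variable {ι α β : Type*} [DecidableEq α]

theorem disjoint_sdiff_of_inter_subset {s t u : Finset α} (h : s ∩ t ⊆ u) :
    Disjoint (s \ u) (t \ u) :=
  disjoint_left.mpr fun _ hs ht => (mem_sdiff.mp hs).2 (h (mem_inter.mpr ⟨(mem_sdiff.mp hs).1,
    (mem_sdiff.mp ht).1⟩))

theorem card_filter_not_disjoint_le {s : Finset β} {δ : β → Finset α}
    (hδ : ∀ G ∈ s, ∀ G' ∈ s, G ≠ G' → Disjoint (δ G) (δ G')) (V : Finset α) :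
    #(s.filter fun G => ¬ Disjoint (δ G) V) ≤ #V := by
  set bad := s.filter fun G => ¬ Disjoint (δ G) V
  calc #bad ≤ ∑ G ∈ bad, #(δ G ∩ V) := by
        rw [card_eq_sum_ones]
        refine sum_le_sum fun G hG => card_pos.mpr ?_
        exact not_disjoint_iff_nonempty_inter.mp (mem_filter.mp hG).2
    _ = #(bad.biUnion fun G => δ G ∩ V) := by
        refine (card_biUnion fun G hG G' hG' hne => ?_).symm
        exact (hδ G (mem_filter.mp hG).1 G' (mem_filter.mp hG').1 hne).mono inter_subset_left
          inter_subset_left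
    _ ≤ #V := card_le_card (biUnion_subset.mpr fun _ _ => inter_subset_right)

theorem exists_subset_card_eq_disjoint {s : Finset β} {δ : β → Finset α}
    (hδ : ∀ G ∈ s, ∀ G' ∈ s, G ≠ G' → Disjoint (δ G) (δ G')) {V : Finset α} {b : ℕ}
    (hb : #V + b ≤ #s) : ∃ S ⊆ s, #S = b ∧ ∀ G ∈ S, Disjoint (δ G) V := by
  have := card_filter_add_card_filter_not (s := s) fun G => Disjoint (δ G) V
  have := card_filter_not_disjoint_le hδ V
  obtain ⟨S, hS, hScard⟩ :=
    exists_subset_card_eq (show b ≤ #(s.filter fun G => Disjoint (δ G) V) by omega)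
  exact ⟨S, hS.trans (filter_subset _ _), hScard, fun G hG => (mem_filter.mp (hS hG)).2⟩

/-- Greedy choice: each point used so far spoils at most one member of `src j`, since the sets
`δ G` with `G ∈ src j` are pairwise disjoint. -/
theorem exists_disjoint_selection (δ : β → Finset α) (src : ι → Finset β) {k N : ℕ} (hk : 0 < k)
    (b : ι → ℕ) (u : Finset ι) (hδk : ∀ j ∈ u, ∀ G ∈ src j, #(δ G) ≤ k)
    (hδ : ∀ j ∈ u, ∀ G ∈ src j, ∀ G' ∈ src j, G ≠ G' → Disjoint (δ G) (δ G')) :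
    ∀ V : Finset α, (∀ j ∈ u, N ≤ #(src j)) → #V + k * ∑ j ∈ u, b j ≤ N →
      ∃ sel : ι → Finset β, (∀ j ∈ u, sel j ⊆ src j ∧ #(sel j) = b j) ∧
        (∀ j ∈ u, ∀ G ∈ sel j, Disjoint (δ G) V) ∧
        ∀ j ∈ u, ∀ j' ∈ u, j ≠ j' → ∀ G ∈ sel j, ∀ G' ∈ sel j', Disjoint (δ G) (δ G') := by
  classical
  induction u using Finset.induction_on with
  | empty => exact fun _ _ _ => ⟨fun _ => ∅, by simp, by simp, by simp⟩
  | insert j u hj ih =>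
    intro V hN hV
    have hj' := mem_insert_self j u
    rw [sum_insert hj, mul_add] at hV
    have : b j ≤ k * b j := Nat.le_mul_of_pos_left _ hk
    obtain ⟨S, hSsrc, hScard, hSV⟩ :=
      exists_subset_card_eq_disjoint (hδ j hj') (V := V) (b := b j) (by have := hN j hj'; omega)
    have hV' : #(V ∪ S.biUnion δ) ≤ #V + k * b j := (card_union_le _ _).trans
      (Nat.add_le_add_left ((card_biUnion_le_card_mul _ _ _ fun G hG =>
        hδk j hj' G (hSsrc hG)).trans_eq (by rw [hScard, mul_comm])) _)
    obtain ⟨sel, hsel, hselV, hselδ⟩ :=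
      ih (fun i hi => hδk i (mem_insert_of_mem hi)) (fun i hi => hδ i (mem_insert_of_mem hi))
        (V ∪ S.biUnion δ) (fun i hi => hN i (mem_insert_of_mem hi)) (by omega)
    have hSsel : ∀ i ∈ u, ∀ G ∈ S, ∀ G' ∈ sel i, Disjoint (δ G) (δ G') := fun i hi G hG G' hG' =>
      ((hselV i hi G' hG').mono_right (subset_union_right.trans' (subset_biUnion_of_mem δ hG))).symm
    have hne : ∀ i ∈ u, i ≠ j := fun i hi h => hj (h ▸ hi)
    refine ⟨update sel j S, fun i hi => ?_, fun i hi => ?_, fun i hi i' hi' hii' => ?_⟩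
    · rcases mem_insert.mp hi with rfl | hi
      · simpa using ⟨hSsrc, hScard⟩
      · simpa [hne i hi] using hsel i hi
    · rcases mem_insert.mp hi with rfl | hi
      · simpa using hSV
      · simpa [hne i hi] using fun G hG => (hselV i hi G hG).mono_right subset_union_left
    · rcases mem_insert.mp hi with rfl | hiu <;> rcases mem_insert.mp hi' with rfl | hiu'
      · exact absurd rfl hii'
      · simpa [hne i' hiu'] using hSsel i' hiu'
      · simpa [hne i hiu] using fun G hG G' hG' => (hSsel i hiu G' hG' G hG).symm
      · simpa [hne i hiu, hne i' hiu'] using hselδ i hiu i' hiu' hii'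

variable {p k d : ℕ} {a : Fin p → ℕ} {H : Finset (Finset ℕ)} {Y : Finset ℕ}

theorem containsADSystem_of_selection {b : Fin p → ℕ} (hb : ∀ j, 0 < b j)
    (hbd : ∑ j, b j = d) (hY : Y ∈ H) {A : Fin p → Finset ℕ} (hA : IsAPartition p a A Y)
    (sel : Fin p → Finset (Finset ℕ)) (hcard : ∀ j, #(sel j) = b j)
    (hsel : ∀ j, ∀ G ∈ sel j, G ∈ H ∧ G ≠ Y ∧ Y ∩ G = Y \ A j)
    (hpetal : ∀ j, ∀ G ∈ sel j, ∀ G' ∈ sel j, G ≠ G' → G ∩ G' = Y \ A j)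
    (hcross : ∀ j j', j ≠ j' → ∀ G ∈ sel j, ∀ G' ∈ sel j', Disjoint (G \ Y) (G' \ Y)) :
    ContainsADSystem p a d H := by
  let E : (j : Fin p) → Fin (b j) → Finset ℕ := fun j m =>
    ((sel j).equivFinOfCardEq (hcard j)).symm m
  have hE : ∀ j m, E j m ∈ sel j := fun j m => Subtype.prop _
  have hEinj : ∀ j, Injective (E j) := fun j =>
    Subtype.val_injective.comp (Equiv.injective _)
  refine ⟨b, hb, hbd, Y, hY, E, fun j m => (hsel j _ (hE j m)).1,
    ⟨A, hA, fun j => ⟨fun m => (hsel j _ (hE j m)).2.1, hEinj j,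
      fun m => (hsel j _ (hE j m)).2.2,
      fun m m' hm => hpetal j _ (hE j m) _ (hE j m') ((hEinj j).ne hm)⟩⟩, ?_⟩
  rintro ⟨j, m⟩ ⟨j', m'⟩ hne
  by_cases hj : j = j'
  · subst hj
    have hm : m ≠ m' := fun h => hne (by rw [h])
    exact disjoint_sdiff_of_inter_subset
      (hpetal j _ (hE j m) _ (hE j m') ((hEinj j).ne hm) ▸ sdiff_subset)
  · exact hcross j j' hj _ (hE j m) _ (hE j' m')

theorem exists_pos_sum_eq (hpd : p ≤ d) (j₁ : Fin p) :
    ∃ b : Fin p → ℕ, (∀ j, 0 < b j) ∧ ∑ j, b j = d ∧ ∀ j ≠ j₁, b j = 1 := by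
  refine ⟨update 1 j₁ (d + 1 - p), fun j => ?_, ?_, fun j hj => by simp [hj]⟩
  · rcases eq_or_ne j j₁ with rfl | hj <;> simp [*]
  · rw [sum_update_of_mem (mem_univ j₁)]
    simp [card_sdiff]
    have := j₁.pos
    omega

theorem exists_petal_selection (hk : 0 < k) (hH : ∀ G ∈ H, #G ≤ k) {u : Finset (Fin p)}
    {C : Fin p → Finset ℕ} (D : Fin p → Finset (Finset ℕ))
    (hD : ∀ j ∈ u, D j ⊆ H ∧ Y ∈ D j ∧ k * d < #(D j) ∧ IsDeltaSystem (D j) (C j))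
    (b : Fin p → ℕ) {V₀ : Finset ℕ} (hV₀ : #V₀ + k * ∑ j ∈ u, b j ≤ k * d) :
    ∃ sel : Fin p → Finset (Finset ℕ),
      (∀ j ∈ u, #(sel j) = b j ∧ ∀ G ∈ sel j, G ∈ H ∧ G ≠ Y ∧ Y ∩ G = C j ∧ Disjoint (G \ Y) V₀) ∧
      (∀ j ∈ u, ∀ G ∈ sel j, ∀ G' ∈ sel j, G ≠ G' → G ∩ G' = C j) ∧
      ∀ j ∈ u, ∀ j' ∈ u, j ≠ j' → ∀ G ∈ sel j, ∀ G' ∈ sel j', Disjoint (G \ Y) (G' \ Y) := by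
  have hpetal : ∀ j ∈ u, ∀ G ∈ (D j).erase Y, G ∈ H ∧ G ≠ Y ∧ Y ∩ G = C j := by
    intro j hj G hG
    obtain ⟨hDH, hYD, -, -, hΔ⟩ := hD j hj
    exact ⟨hDH (mem_of_mem_erase hG), ne_of_mem_erase hG,
      hΔ Y hYD G (mem_of_mem_erase hG) (ne_of_mem_erase hG).symm⟩
  have hpetal₂ : ∀ j ∈ u, ∀ G ∈ (D j).erase Y, ∀ G' ∈ (D j).erase Y, G ≠ G' → G ∩ G' = C j :=
    fun j hj G hG G' hG' => (hD j hj).2.2.2.2 G (mem_of_mem_erase hG) G' (mem_of_mem_erase hG')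
  obtain ⟨sel, hsel, hselV, hselδ⟩ := exists_disjoint_selection (· \ Y) (fun j => (D j).erase Y)
    (N := k * d) hk b u (fun j hj G hG => (card_le_card sdiff_subset).trans
      (hH G (hpetal j hj G hG).1))
    (fun j hj G hG G' hG' hne => disjoint_sdiff_of_inter_subset
      (hpetal₂ j hj G hG G' hG' hne ▸ (hpetal j hj G hG).2.2 ▸ inter_subset_left)) V₀
    (fun j hj => by
      have := (hD j hj).2.2.1
      rw [card_erase_of_mem (hD j hj).2.1]; omega) hV₀
  refine ⟨sel, fun j hj => ⟨(hsel j hj).2, fun G hG => ?_⟩,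
    fun j hj G hG G' hG' => hpetal₂ j hj G ((hsel j hj).1 hG) G' ((hsel j hj).1 hG'), hselδ⟩
  obtain ⟨hGH, hGY, hYG⟩ := hpetal j hj G ((hsel j hj).1 hG)
  exact ⟨hGH, hGY, hYG, hselV j hj G hG⟩

theorem containsADSystem_of_sunflowers (hk : 0 < k) (hpd : p ≤ d) (hH : ∀ G ∈ H, #G ≤ k)
    (hY : Y ∈ H) {A : Fin p → Finset ℕ} (hA : IsAPartition p a A Y) {S : Finset (Fin p)}
    {j₁ : Fin p} (hj₁ : j₁ ∉ S) (F : Fin p → Finset ℕ)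
    (hF : ∀ j ∈ S, F j ∈ H ∧ F j ≠ Y ∧ Y ∩ F j = Y \ A j)
    (hFdisj : ∀ j ∈ S, ∀ j' ∈ S, j ≠ j' → Disjoint (F j \ Y) (F j' \ Y))
    (D : Fin p → Finset (Finset ℕ))
    (hD : ∀ j ∉ S, D j ⊆ H ∧ Y ∈ D j ∧ k * d < #(D j) ∧ IsDeltaSystem (D j) (Y \ A j)) :
    ContainsADSystem p a d H := by
  obtain ⟨b, hb, hbd, hb1⟩ := exists_pos_sum_eq hpd j₁
  have hbS : ∑ j ∈ S, b j = #S := by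
    rw [sum_congr rfl fun j hj => hb1 j (ne_of_mem_of_not_mem hj hj₁)]; simp
  have hbSc : ∑ j ∈ Sᶜ, b j + #S = d := by rw [← hbS, sum_compl_add_sum, hbd]
  set V₀ := S.biUnion fun j => F j \ Y
  have hV₀ : #V₀ ≤ #S * k := card_biUnion_le_card_mul _ _ _ fun j hj =>
    (card_le_card sdiff_subset).trans (hH _ (hF j hj).1)
  have hV₀F : ∀ i ∈ S, F i \ Y ⊆ V₀ := fun i hi => subset_biUnion_of_mem (fun j => F j \ Y) hi
  obtain ⟨sel, hsel, hpetal, hselδ⟩ := exists_petal_selection hk hH D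
    (fun j hj => hD j (mem_compl.mp hj)) b (V₀ := V₀)
    (by rw [← hbSc, mul_add, mul_comm k #S]; omega)
  refine containsADSystem_of_selection hb hbd hY hA (fun j => if j ∈ S then {F j} else sel j)
    (fun j => ?_) (fun j G hG => ?_) (fun j G hG G' hG' hne => ?_) (fun j j' hjj' G hG G' hG' => ?_)
  · split_ifs with hj
    · rw [card_singleton, hb1 j (ne_of_mem_of_not_mem hj hj₁)]
    · exact (hsel j (mem_compl.mpr hj)).1
  · split_ifs at hG with hj
    · exact (mem_singleton.mp hG) ▸ hF j hj
    · exact ((hsel j (mem_compl.mpr hj)).2 G hG).imp_right fun h => h.imp_right And.left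
  · split_ifs at hG hG' with hj
    · exact absurd ((mem_singleton.mp hG).trans (mem_singleton.mp hG').symm) hne
    · exact hpetal j (mem_compl.mpr hj) G hG G' hG' hne
  · split_ifs at hG hG' with hj hj' hj'
    · rw [mem_singleton.mp hG, mem_singleton.mp hG']; exact hFdisj j hj j' hj' hjj'
    · rw [mem_singleton.mp hG]
      exact ((hsel j' (mem_compl.mpr hj')).2 G' hG').2.2.2.symm.mono_left (hV₀F j hj)
    · rw [mem_singleton.mp hG']
      exact ((hsel j (mem_compl.mpr hj)).2 G hG).2.2.2.mono_right (hV₀F j' hj')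
    · exact hselδ j (mem_compl.mpr hj) j' (mem_compl.mpr hj') hjj' G hG G' hG'

end DeltaSystems

section Homogeneous

open Function

variable {n k s p d : ℕ}

structure IsHomogeneousPartition (n k s : ℕ) (H : Finset (Finset ℕ))
    (J : Finset (Finset (Fin k))) (V : Fin k → Finset ℕ) : Prop where
  disjoint : ∀ i j, i ≠ j → Disjoint (V i) (V j)
  sup_eq : univ.sup V = Icc 1 n
  card_inter : ∀ E ∈ H, ∀ i, #(E ∩ V i) = 1
  univ_notMem : univ ∉ J
  image_proj : ∀ E ∈ H, (interStruct H E).image (proj V) = J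
  inter_mem : ∀ A ∈ J, ∀ B ∈ J, A ∩ B ∈ J
  exists_deltaSystem : ∀ E ∈ H, ∀ C ∈ interStruct H E,
    ∃ D : Finset (Finset ℕ), D ⊆ H ∧ E ∈ D ∧ D.card = s ∧ IsDeltaSystem D C

theorem IsHomogeneousWith.exists_partition {H : Finset (Finset ℕ)} {J : Finset (Finset (Fin k))}
    (h : IsHomogeneousWith n k s H J) : ∃ V, IsHomogeneousPartition n k s H J V := by
  obtain ⟨V, h₁, h₂, h₃, h₄, h₅, h₆, h₇⟩ := h
  exact ⟨V, h₁, h₂, h₃, h₄, h₅, h₆, h₇⟩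

/-- The vertex of `Y` in the part `V i` (junk value `0` if there is none). -/
def partVertex (V : Fin k → Finset ℕ) (Y : Finset ℕ) (i : Fin k) : ℕ :=
  if h : (Y ∩ V i).Nonempty then (Y ∩ V i).min' h else 0

section PartVertex

variable {V : Fin k → Finset ℕ} {Y : Finset ℕ} (hY : ∀ i, #(Y ∩ V i) = 1)
include hY

theorem inter_eq_singleton_partVertex (i : Fin k) : Y ∩ V i = {partVertex V Y i} := by
  obtain ⟨v, hv⟩ := card_eq_one.mp (hY i)
  simp [partVertex, hv]

theorem partVertex_mem (i : Fin k) : partVertex V Y i ∈ Y :=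
  (mem_inter.mp ((inter_eq_singleton_partVertex hY i).symm ▸ mem_singleton_self _)).1

theorem partVertex_mem_part (i : Fin k) : partVertex V Y i ∈ V i :=
  (mem_inter.mp ((inter_eq_singleton_partVertex hY i).symm ▸ mem_singleton_self _)).2

theorem partVertex_eq_of_mem {v : ℕ} {i : Fin k} (hvY : v ∈ Y) (hvV : v ∈ V i) :
    partVertex V Y i = v :=
  (mem_singleton.mp (inter_eq_singleton_partVertex hY i ▸ mem_inter.mpr ⟨hvY, hvV⟩)).symm

theorem partVertex_injective (hV : ∀ i j, i ≠ j → Disjoint (V i) (V j)) :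
    Injective (partVertex V Y) := fun i j hij => by
  by_contra hne
  exact disjoint_left.mp (hV i j hne) (partVertex_mem_part hY i) (hij ▸ partVertex_mem_part hY j)

theorem image_partVertex_univ (hV : ∀ i j, i ≠ j → Disjoint (V i) (V j)) (hYk : #Y = k) :
    univ.image (partVertex V Y) = Y :=
  eq_of_subset_of_card_le (image_subset_iff.mpr fun i _ => partVertex_mem hY i) (by
    rw [card_image_of_injective _ (partVertex_injective hY hV), card_univ, Fintype.card_fin, hYk])

theorem image_partVertex_proj {C : Finset ℕ} (hC : C ⊆ Y) (hCV : C ⊆ univ.sup V) :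
    (proj V C).image (partVertex V Y) = C := by
  ext v
  simp only [proj, mem_image, mem_filter, mem_univ, true_and]
  constructor
  · rintro ⟨i, ⟨u, hu⟩, rfl⟩
    rw [mem_inter] at hu
    rw [partVertex_eq_of_mem hY (hC hu.1) hu.2]
    exact hu.1
  · intro hv
    obtain ⟨i, -, hi⟩ := mem_sup.mp (hCV hv)
    exact ⟨i, ⟨v, mem_inter.mpr ⟨hv, hi⟩⟩, partVertex_eq_of_mem hY (hC hv) hi⟩

end PartVertex

variable {Hs : Finset (Finset ℕ)} {J : Finset (Finset (Fin k))} {V : Fin k → Finset ℕ}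

namespace IsHomogeneousPartition

theorem image_partVertex_mem_interStruct (hV : IsHomogeneousPartition n k s Hs J V)
    {Y : Finset ℕ} (hY : Y ∈ Hs) (hYn : Y ⊆ Icc 1 n) {B : Finset (Fin k)} (hB : B ∈ J) :
    B.image (partVertex V Y) ∈ interStruct Hs Y := by
  obtain ⟨C, hC, rfl⟩ := mem_image.mp (hV.image_proj Y hY ▸ hB)
  have hCY : C ⊆ Y := by
    obtain ⟨E', -, rfl⟩ := mem_image.mp hC
    exact inter_subset_left
  rwa [image_partVertex_proj (hV.card_inter Y hY) hCY (hV.sup_eq ▸ hCY.trans hYn)]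

variable {a : Fin p → ℕ} {H : Finset (Finset ℕ)}

/-- For `j ∉ S`, homogeneity turns `(P j)ᶜ ∈ J` into a sunflower of `s` edges through `Y` with
center `Y ∖ A j`, where `A j` is the image of `P j` in `Y`. -/
theorem containsADSystem_of_indexPartition (hV : IsHomogeneousPartition n k s Hs J V)
    (hsub : Hs ⊆ H) (hH : H ⊆ powersetCard k (Icc 1 n)) (hs : k * d + 1 ≤ s) (hpd : p ≤ d)
    (hk : 0 < k) (hsum : ∑ j, a j = k) {Y : Finset ℕ} (hY : Y ∈ Hs)
    {P : Fin p → Finset (Fin k)} (hPcard : ∀ j, #(P j) = a j) (hPdisj : Pairwise (Disjoint on P))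
    {S : Finset (Fin p)} {j₁ : Fin p} (hj₁ : j₁ ∉ S) (F : Fin p → Finset ℕ)
    (hF : ∀ j ∈ S, F j ∈ H ∧ F j ≠ Y ∧ Y ∩ F j = Y \ (P j).image (partVertex V Y))
    (hFdisj : ∀ j ∈ S, ∀ j' ∈ S, j ≠ j' → Disjoint (F j \ Y) (F j' \ Y))
    (hJ : ∀ j ∉ S, (P j)ᶜ ∈ J) : ContainsADSystem p a d H := by
  have hYH := mem_powersetCard.mp (hH (hsub hY))
  have hY1 := hV.card_inter Y hY
  have he := partVertex_injective hY1 hV.disjoint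
  have hcover : univ.biUnion P = univ := eq_univ_of_card _ (by
    rw [card_biUnion fun i _ j _ hij => hPdisj hij, Fintype.card_fin]
    simp [hPcard, hsum])
  have hcompl : ∀ B : Finset (Fin k), Bᶜ.image (partVertex V Y) = Y \ B.image (partVertex V Y) :=
    fun B => by
      rw [compl_eq_univ_sdiff, image_sdiff _ _ he, image_partVertex_univ hY1 hV.disjoint hYH.2]
  have hA : IsAPartition p a (fun j => (P j).image (partVertex V Y)) Y := by
    refine ⟨fun j => by rw [card_image_of_injective _ he, hPcard], fun i j hij => ?_, ?_⟩
    · exact (disjoint_image he).mpr (hPdisj hij)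
    · rw [sup_eq_biUnion, ← biUnion_image, hcover, image_partVertex_univ hY1 hV.disjoint hYH.2]
  have hsun : ∀ j ∉ S, ∃ D : Finset (Finset ℕ), D ⊆ H ∧ Y ∈ D ∧ k * d < #D ∧
      IsDeltaSystem D (Y \ (P j).image (partVertex V Y)) := by
    intro j hj
    obtain ⟨D, hDH, hYD, hDs, hΔ⟩ := hV.exists_deltaSystem Y hY _
      (hV.image_partVertex_mem_interStruct hY hYH.1 (hJ j hj))
    exact ⟨D, hDH.trans hsub, hYD, by omega, hcompl _ ▸ hΔ⟩
  choose! D hD using hsun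
  exact containsADSystem_of_sunflowers hk hpd (fun G hG => (mem_powersetCard.mp (hH hG)).2.le)
    (hsub hY) hA hj₁ F hF hFdisj D hD

end IsHomogeneousPartition

end Homogeneous

section Pattern

variable {k : ℕ} {J : Finset (Finset (Fin k))}

def missingCoatoms (J : Finset (Finset (Fin k))) : Finset (Fin k) :=
  univ.filter fun x => {x}ᶜ ∉ J

theorem mem_missingCoatoms {x : Fin k} : x ∈ missingCoatoms J ↔ {x}ᶜ ∉ J := by
  simp [missingCoatoms]

theorem two_le_card_missingCoatoms (hk : 2 ≤ k)
    (hJ : #(J.filter fun A => A.card = k - 1) ≤ k - 2) : 2 ≤ #(missingCoatoms J) := by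
  have hcompl : #(missingCoatoms J)ᶜ ≤ k - 2 := by
    refine (card_le_card_of_injOn (fun x => {x}ᶜ) (fun x hx => ?_) ?_).trans hJ
    · simp_all [missingCoatoms, card_compl]
    · intro x _ y _ hxy
      simpa using hxy
  have := card_compl (missingCoatoms J)
  rw [Fintype.card_fin] at this
  have := card_le_univ (missingCoatoms J)
  rw [Fintype.card_fin] at this
  omega

theorem exists_superset_mem_of_card_lt_patternRank {A : Finset (Fin k)}
    (hA : #A < patternRank J) : ∃ B ∈ J, A ⊆ B := by
  by_contra! h
  have : patternRank J ≤ #A := Nat.sInf_le ⟨A, fun hAJ => h A hAJ subset_rfl, h, rfl⟩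
  omega

theorem compl_pair_mem (hk : 2 ≤ k) (hrank : patternRank J = k - 1) (huniv : univ ∉ J)
    {x y : Fin k} (hx : x ∈ missingCoatoms J) (hy : y ∈ missingCoatoms J) (hxy : x ≠ y) :
    {x, y}ᶜ ∈ J := by
  rw [mem_missingCoatoms] at hx hy
  obtain ⟨B, hB, hxyB⟩ := exists_superset_mem_of_card_lt_patternRank (J := J)
    (A := {x, y}ᶜ) (by rw [card_compl, card_pair hxy, hrank, Fintype.card_fin]; omega)
  have hB' : ∀ z, z ≠ x → z ≠ y → z ∈ B := fun z hzx hzy => hxyB (by simp [hzx, hzy])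
  by_cases hxB : x ∈ B <;> by_cases hyB : y ∈ B
  · have : B = univ := eq_univ_of_forall fun z => by
      by_cases hzx : z = x <;> by_cases hzy : z = y <;> simp_all
    exact absurd (this ▸ hB) huniv
  · have : B = {y}ᶜ := by ext z; by_cases hzx : z = x <;> by_cases hzy : z = y <;> simp_all
    exact absurd (this ▸ hB) hy
  · have : B = {x}ᶜ := by ext z; by_cases hzx : z = x <;> by_cases hzy : z = y <;> simp_all
    exact absurd (this ▸ hB) hx
  · have : B = {x, y}ᶜ := by
      ext z; by_cases hzx : z = x <;> by_cases hzy : z = y <;> simp_all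
    exact this ▸ hB

/-- Rank `k - 1` and closure under intersection give `Pᶜ ∈ J` whenever `P` can be covered by
singletons outside `missingCoatoms J` and pairs inside it. -/
theorem compl_mem_of_card_inter_ne_one (hk : 2 ≤ k) (hrank : patternRank J = k - 1)
    (huniv : univ ∉ J) (hinter : ∀ A ∈ J, ∀ B ∈ J, A ∩ B ∈ J) {P : Finset (Fin k)}
    (hP : P.Nonempty) (hPI : #(P ∩ missingCoatoms J) ≠ 1) : Pᶜ ∈ J := by
  have hcover : ∀ v ∈ P, ∃ Q ⊆ P, v ∈ Q ∧ Qᶜ ∈ J := by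
    intro v hv
    by_cases hvI : v ∈ missingCoatoms J
    · have : 1 < #(P ∩ missingCoatoms J) := by
        have := card_pos.mpr ⟨v, mem_inter.mpr ⟨hv, hvI⟩⟩; omega
      obtain ⟨u, hu, huv⟩ := exists_mem_ne this v
      exact ⟨{v, u}, insert_subset hv (singleton_subset_iff.mpr (mem_inter.mp hu).1),
        mem_insert_self _ _, compl_pair_mem hk hrank huniv hvI (mem_inter.mp hu).2 huv.symm⟩
    · exact ⟨{v}, singleton_subset_iff.mpr hv, mem_singleton_self v,
        not_not.mp (mem_missingCoatoms.not.mp hvI)⟩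
  choose! Q hQ using hcover
  have hPQ : Pᶜ = P.inf' hP fun v => (Q v)ᶜ := by
    ext z
    simp only [mem_compl, mem_inf']
    exact ⟨fun hz v hv hzv => hz ((hQ v hv).1 hzv), fun h hz => h z hz (hQ z hz).2.1⟩
  rw [hPQ]
  exact inf'_mem (J : Set (Finset (Fin k))) hinter P hP _ fun v hv => (hQ v hv).2.2

end Pattern

section IndexPartition

open Function

theorem exists_indexPartition {p k : ℕ} {a c : Fin p → ℕ} (hsum : ∑ j, a j = k)
    {I R : Finset (Fin k)} {S : Finset (Fin p)} (hR : ∑ j ∈ S, a j = #R) (hc : ∀ j, c j ≤ a j)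
    (hcS : ∀ j ∈ S, c j = 0) (hcsum : ∑ j, c j = #(I \ R)) :
    ∃ P : Fin p → Finset (Fin k), (∀ j, #(P j) = a j) ∧ Pairwise (Disjoint on P) ∧
      (∀ j ∈ S, P j ⊆ R) ∧ ∀ j ∉ S, #(P j ∩ I) = c j := by
  let g : Fin p → ℕ := fun j => if j ∈ S then a j else 0
  have hg : ∑ j, g j = #R := by simp [g, sum_ite_mem, hR]
  have hagc : ∀ j, g j + c j + (a j - c j - g j) = a j := fun j => by
    by_cases hj : j ∈ S <;> simp [g, hj, hcS, hc j]
  have hrest : ∑ j, (a j - c j - g j) = #(R ∪ I)ᶜ := by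
    have := sum_congr rfl fun j (_ : j ∈ univ) => hagc j
    simp only [sum_add_distrib, hsum] at this
    rw [card_compl, Fintype.card_fin, ← union_sdiff_self_eq_union,
      card_union_of_disjoint disjoint_sdiff]
    omega
  obtain ⟨P₀, hP₀, hP₀d⟩ := exists_pairwise_disjoint_card_eq R g hg
  obtain ⟨P₁, hP₁, hP₁d⟩ := exists_pairwise_disjoint_card_eq (I \ R) c hcsum
  obtain ⟨P₂, hP₂, hP₂d⟩ := exists_pairwise_disjoint_card_eq (R ∪ I)ᶜ _ hrest
  have h₀₁ : Disjoint R (I \ R) := disjoint_sdiff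
  have h₀₁₂ : Disjoint (R ∪ I \ R) (R ∪ I)ᶜ := by
    rw [union_sdiff_self_eq_union]; exact disjoint_compl_right
  refine ⟨fun j => P₀ j ∪ P₁ j ∪ P₂ j, fun j => ?_, ?_, fun j hj => ?_, fun j hj => ?_⟩
  · rw [card_union_of_disjoint (h₀₁₂.mono (union_subset_union (hP₀ j).1 (hP₁ j).1) (hP₂ j).1),
      card_union_of_disjoint (h₀₁.mono (hP₀ j).1 (hP₁ j).1), (hP₀ j).2, (hP₁ j).2, (hP₂ j).2,
      hagc]
  · exact Pairwise.disjoint_union h₀₁₂ (fun j => union_subset_union (hP₀ j).1 (hP₁ j).1)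
      (fun j => (hP₂ j).1) (Pairwise.disjoint_union h₀₁ (fun j => (hP₀ j).1)
        (fun j => (hP₁ j).1) hP₀d hP₁d) hP₂d
  · have h₁ : P₁ j = ∅ := card_eq_zero.mp ((hP₁ j).2.trans (hcS j hj))
    have h₂ : P₂ j = ∅ := card_eq_zero.mp (by rw [(hP₂ j).2, ← hagc j]; simp [g, hj, hcS j hj])
    simpa [h₁, h₂] using (hP₀ j).1
  · have h₀ : P₀ j = ∅ := card_eq_zero.mp (by rw [(hP₀ j).2]; simp [g, hj])
    have h₂ : P₂ j ∩ I = ∅ := disjoint_iff_inter_eq_empty.mp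
      (disjoint_of_subset_left (hP₂ j).1 (disjoint_compl_left.mono_right subset_union_right))
    show #((P₀ j ∪ P₁ j ∪ P₂ j) ∩ I) = c j
    rw [h₀, empty_union, union_inter_distrib_right, h₂, union_empty,
      inter_eq_left.mpr ((hP₁ j).1.trans sdiff_subset), (hP₁ j).2]

end IndexPartition

section Weight

variable {k : ℕ} {H : Finset (Finset ℕ)} {E : Finset ℕ}

def replacements (H : Finset (Finset ℕ)) (E : Finset ℕ) (v : ℕ) : Finset ℕ :=
  (H.biUnion id).filter fun w => w ∉ E ∧ insert w (E.erase v) ∈ H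

theorem mem_replacements {v w : ℕ} :
    w ∈ replacements H E v ↔ w ∉ E ∧ insert w (E.erase v) ∈ H := by
  simp only [replacements, mem_filter, mem_biUnion, id, and_iff_right_iff_imp]
  exact fun h => ⟨_, h.2, mem_insert_self _ _⟩

theorem degSet_erase (hH : ∀ G ∈ H, #G = #E) (hE : E ∈ H) {v : ℕ} (hv : v ∈ E) :
    degSet H (E.erase v) = #(replacements H E v) + 1 := by
  have hrepl : H.filter (E.erase v ⊆ ·) =
      insert E ((replacements H E v).image fun w => insert w (E.erase v)) := by
    ext G
    simp only [mem_filter, mem_insert, mem_image, mem_replacements]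
    constructor
    · rintro ⟨hG, hEG⟩
      by_cases hGE : G = E
      · exact .inl hGE
      obtain ⟨w, hwG, hwE⟩ : ∃ w ∈ G, w ∉ E.erase v := by
        by_contra! h
        have := card_le_card h
        rw [hH G hG, card_erase_of_mem hv] at this
        have := card_pos.mpr ⟨v, hv⟩
        omega
      have hGw : insert w (E.erase v) = G := eq_of_subset_of_card_le (insert_subset hwG hEG) (by
        rw [hH G hG, card_insert_of_notMem hwE, card_erase_of_mem hv]; omega)
      have hwE' : w ∉ E := fun h => hGE (by rw [← hGw, (by simpa [h] using hwE : w = v),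
        insert_erase hv])
      exact .inr ⟨w, ⟨hwE', hGw ▸ hG⟩, hGw⟩
    · rintro (rfl | ⟨w, ⟨-, hw⟩, rfl⟩)
      · exact ⟨hE, erase_subset v G⟩
      · exact ⟨hw, subset_insert w _⟩
  rw [degSet, hrepl, card_insert_of_notMem, card_image_of_injOn]
  · intro w hw w' hw' h
    simp only at h
    have : w ∈ insert w' (E.erase v) := h ▸ mem_insert_self w _
    rw [mem_insert, mem_erase] at this
    exact this.resolve_right fun h' => (mem_replacements.mp hw).1 h'.2
  · simp only [mem_image, not_exists, not_and]
    intro w hw h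
    exact (mem_replacements.mp hw).1 (h ▸ mem_insert_self w _)

theorem card_div_le_weight (hE : E ∈ H) (hEk : #E = k) {T : Finset ℕ} (hT : T ⊆ E) {β : ℕ}
    (hdeg : ∀ v ∈ T, degSet H (E.erase v) ≤ β) :
    (#T : ℝ) / β ≤ weight k H E := by
  have hdeg_pos : ∀ v ∈ T, (0 : ℝ) < degSet H (E.erase v) := fun v _ =>
    Nat.cast_pos.mpr (card_pos.mpr ⟨E, mem_filter.mpr ⟨hE, erase_subset v E⟩⟩)
  calc (#T : ℝ) / β = ∑ _v ∈ T, (1 : ℝ) / β := by rw [sum_const, nsmul_eq_mul]; ring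
    _ ≤ ∑ v ∈ T, (1 : ℝ) / degSet H (E.erase v) := sum_le_sum fun v hv =>
        one_div_le_one_div_of_le (hdeg_pos v hv) (by exact_mod_cast hdeg v hv)
    _ = ∑ E' ∈ T.image E.erase, (1 : ℝ) / degSet H E' := by
        rw [sum_image ((erase_injOn E).mono hT)]
    _ ≤ weight k H E := by
        refine sum_le_sum_of_subset_of_nonneg (image_subset_iff.mpr fun v hv => ?_)
          fun _ _ _ => by positivity
        rw [mem_powersetCard, card_erase_of_mem (hT hv), hEk]
        exact ⟨erase_subset v E, rfl⟩

theorem div_le_weight_of_degSet_lt (hE : E ∈ H) (hEk : #E = k) {T : Finset ℕ} (hT : T ⊆ E)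
    (hT2 : 2 ≤ #T) (hdeg : ∀ v ∈ T, degSet H (E.erase v) < #T) :
    (k : ℝ) / (k - 1) ≤ weight k H E := by
  have hTk : (#T : ℝ) ≤ k := by exact_mod_cast hEk ▸ card_le_card hT
  have hT2' : (2 : ℝ) ≤ #T := by exact_mod_cast hT2
  refine le_trans ?_ (card_div_le_weight hE hEk hT (β := #T - 1)
    fun v hv => by have := hdeg v hv; omega)
  rw [Nat.cast_sub (by omega), Nat.cast_one, div_le_div_iff₀ (by linarith) (by linarith)]
  nlinarith

theorem div_le_weight_of_card_biUnion_replacements_lt (hH : ∀ G ∈ H, #G = k) (hE : E ∈ H)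
    {T : Finset ℕ} (hT : T ⊆ E) (h : #(T.biUnion (replacements H E)) + 1 < #T) :
    (k : ℝ) / (k - 1) ≤ weight k H E := by
  have hEk := hH E hE
  refine div_le_weight_of_degSet_lt hE hEk hT (by omega) fun v hv => ?_
  rw [degSet_erase (hEk ▸ hH) hE (hT hv)]
  have := card_le_card (subset_biUnion_of_mem (replacements H E) hv)
  omega

end Weight

section Constructions

open Function

variable {n p k d s : ℕ} {a : Fin p → ℕ} {H Hs : Finset (Finset ℕ)}
  {J : Finset (Finset (Fin k))} {V : Fin k → Finset ℕ}

theorem inter_insert_erase {E : Finset ℕ} {v w : ℕ} (hw : w ∉ E) :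
    E ∩ insert w (E.erase v) = E.erase v := by
  rw [inter_insert_of_notMem hw, inter_eq_right.mpr (erase_subset v E)]

theorem insert_erase_sdiff {E : Finset ℕ} {v w : ℕ} (hw : w ∉ E) :
    insert w (E.erase v) \ E = {w} := by
  rw [insert_sdiff_of_notMem _ hw, sdiff_eq_empty_iff_subset.mpr (erase_subset v E),
    insert_empty]

theorem containsADSystem_of_matching (hV : IsHomogeneousPartition n k s Hs J V) (hsub : Hs ⊆ H)
    (hH : H ⊆ powersetCard k (Icc 1 n)) (hs : k * d + 1 ≤ s) (hpd : p ≤ d) (hk : 2 ≤ k)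
    (ha : ∀ j, 0 < a j) (hsum : ∑ j, a j = k) (hrank : patternRank J = k - 1) {E : Finset ℕ}
    (hE : E ∈ Hs) {T : Finset (Fin k)} (hT : T ⊆ missingCoatoms J) {w : Fin k → ℕ}
    (hw : Set.InjOn w T) (hwE : ∀ x ∈ T, w x ∈ replacements H E (partVertex V E x))
    {S : Finset (Fin p)} (hS : ∀ j ∈ S, a j = 1) (hST : #S = #T) {j₁ : Fin p} (hj₁ : j₁ ∉ S)
    {c : Fin p → ℕ} (hc : ∀ j, c j ≤ a j ∧ c j ≠ 1)
    (hcsum : ∑ j, c j + #T = #(missingCoatoms J)) : ContainsADSystem p a d H := by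
  set e := partVertex V E
  have hcS : ∀ j ∈ S, c j = 0 := fun j hj => by have := hc j; have := hS j hj; omega
  obtain ⟨P, hPcard, hPdisj, hPS, hPI⟩ := exists_indexPartition hsum (I := missingCoatoms J)
    (R := T) (c := c) (by rw [sum_congr rfl hS, sum_const, smul_eq_mul, mul_one, hST])
    (fun j => (hc j).1) hcS (by rw [card_sdiff_of_subset hT]; omega)
  have hslot : ∀ j ∈ S, ∃ x ∈ T, P j = {x} := fun j hj => by
    obtain ⟨x, hx⟩ := card_eq_one.mp ((hPcard j).trans (hS j hj))
    exact ⟨x, hPS j hj (hx ▸ mem_singleton_self x), hx⟩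
  have hslotF : ∀ j ∈ S, ∃ x ∈ T, P j = {x} ∧
      (E \ (P j).image e) ∪ (P j).image w = insert (w x) (E.erase (e x)) := fun j hj => by
    obtain ⟨x, hxT, hx⟩ := hslot j hj
    refine ⟨x, hxT, hx, ?_⟩
    rw [hx, image_singleton, image_singleton, sdiff_singleton_eq_erase, union_comm, insert_eq]
  refine hV.containsADSystem_of_indexPartition hsub hH hs hpd (by omega) hsum hE hPcard hPdisj hj₁
    (fun j => (E \ (P j).image e) ∪ (P j).image w) (fun j hj => ?_) (fun j hj j' hj' hjj' => ?_)
    fun j hj => compl_mem_of_card_inter_ne_one hk hrank hV.univ_notMem hV.inter_mem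
      (card_pos.mp (by rw [hPcard]; exact ha j)) (by rw [hPI j hj]; exact (hc j).2)
  · obtain ⟨x, hxT, hx, hF⟩ := hslotF j hj
    have hwx := mem_replacements.mp (hwE x hxT)
    rw [hF, hx, image_singleton, sdiff_singleton_eq_erase]
    exact ⟨hwx.2, fun h => hwx.1 (h ▸ mem_insert_self _ _), inter_insert_erase hwx.1⟩
  · obtain ⟨x, hxT, hx, hF⟩ := hslotF j hj
    obtain ⟨x', hxT', hx', hF'⟩ := hslotF j' hj'
    simp only [hF, hF', insert_erase_sdiff (mem_replacements.mp (hwE x hxT)).1,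
      insert_erase_sdiff (mem_replacements.mp (hwE x' hxT')).1, disjoint_singleton]
    intro hww
    have := hPdisj hjj'
    rw [onFun, hx, hx', hw hxT hxT' hww, disjoint_self] at this
    exact singleton_ne_empty _ this

end Constructions

section Swap

open Function

variable {n p k d s : ℕ} {a : Fin p → ℕ} {H Hs : Finset (Finset ℕ)}
  {J : Finset (Finset (Fin k))} {V : Fin k → Finset ℕ}

theorem IsDeltaSystem.exists_mem_ne_notMem {D : Finset (Finset ℕ)} {C : Finset ℕ}
    (hD : IsDeltaSystem D C) (hD3 : 3 ≤ #D) {E : Finset ℕ} (hE : E ∈ D) {w : ℕ} (hw : w ∉ C) :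
    ∃ X ∈ D, X ≠ E ∧ w ∉ X := by
  by_contra! h
  obtain ⟨X, hX, X', hX', hXX'⟩ :=
    one_lt_card.mp (show 1 < #(D.erase E) by rw [card_erase_of_mem hE]; omega)
  rw [mem_erase] at hX hX'
  exact hw (hD.2 X hX.2 X' hX'.2 hXX' ▸ mem_inter.mpr ⟨h X hX.2 hX.1, h X' hX'.2 hX'.1⟩)

/-- `X` is a member of the sunflower through `E` with center `E - e t` avoiding `w`: there are at
least three members and at most one of them contains `w`. -/
theorem IsHomogeneousPartition.exists_swap (hV : IsHomogeneousPartition n k s Hs J V)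
    (hHs : Hs ⊆ powersetCard k (Icc 1 n)) (hs : 3 ≤ s) {E : Finset ℕ} (hE : E ∈ Hs)
    {t : Fin k} (ht : {t}ᶜ ∈ J) {w : ℕ} (hw : w ∉ E) :
    ∃ X ∈ Hs, w ∉ X ∧ ∀ i ≠ t, X ∩ insert w (E.erase (partVertex V E i)) =
      X \ ({i, t} : Finset (Fin k)).image (partVertex V X) := by
  have hEH := mem_powersetCard.mp (hHs hE)
  have hE1 := hV.card_inter E hE
  obtain ⟨D, hDH, hED, hDs, hΔ⟩ :=
    hV.exists_deltaSystem E hE _ (hV.image_partVertex_mem_interStruct hE hEH.1 ht)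
  rw [compl_eq_univ_sdiff, image_sdiff _ _ (partVertex_injective hE1 hV.disjoint),
    image_partVertex_univ hE1 hV.disjoint hEH.2, image_singleton,
    sdiff_singleton_eq_erase] at hΔ
  obtain ⟨X, hXD, hXE, hwX⟩ :=
    hΔ.exists_mem_ne_notMem (by omega) hED fun h => hw (mem_of_mem_erase h)
  have hX := hDH hXD
  have hX1 := hV.card_inter X hX
  have hEX : E ∩ X = E.erase (partVertex V E t) := hΔ.2 E hED X hXD hXE.symm
  have hagree : ∀ i ≠ t, partVertex V X i = partVertex V E i := fun i hit =>
    partVertex_eq_of_mem hX1 (inter_subset_right (s₁ := E) (hEX ▸ mem_erase.mpr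
      ⟨(partVertex_injective hE1 hV.disjoint).ne hit, partVertex_mem hE1 i⟩))
      (partVertex_mem_part hE1 i)
  have hXt : partVertex V X t ∉ E := fun h => by
    have := partVertex_eq_of_mem hE1 h (partVertex_mem_part hX1 t) ▸ partVertex_mem hX1 t
    exact (notMem_erase _ E) (hEX ▸ mem_inter.mpr ⟨partVertex_mem hE1 t, this⟩)
  have hXE : X.erase (partVertex V X t) = E ∩ X := by
    refine (eq_of_subset_of_card_le (fun z hz => mem_erase.mpr ⟨?_, (mem_inter.mp hz).2⟩) ?_).symm
    · rintro rfl; exact hXt (mem_inter.mp hz).1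
    · rw [hEX, card_erase_of_mem (partVertex_mem hX1 t), card_erase_of_mem (partVertex_mem hE1 t),
        hEH.2, (mem_powersetCard.mp (hHs hX)).2]
  refine ⟨X, hX, hwX, fun i hit => ?_⟩
  rw [inter_insert_of_notMem hwX, image_insert, image_singleton, hagree i hit, sdiff_insert,
    sdiff_singleton_eq_erase, hXE, inter_erase, inter_comm]

/-- When all parts have size two, the swapped edge `X` serves as host: its part `{i, t}` is a
slot for the edge `E - e i + w`, while the remaining (evenly many) indices of
`missingCoatoms J` are spread in pairs. -/
theorem containsADSystem_of_mem_replacements_of_all_two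
    (hV : IsHomogeneousPartition n k s Hs J V) (hsub : Hs ⊆ H)
    (hH : H ⊆ powersetCard k (Icc 1 n)) (hs : k * d + 1 ≤ s) (hpd : p ≤ d) (hp : 2 ≤ p)
    (ha : ∀ j, a j = 2) (hsum : ∑ j, a j = k) (hrank : patternRank J = k - 1)
    (hq : Odd #(missingCoatoms J)) {E : Finset ℕ} (hE : E ∈ Hs) {i t : Fin k}
    (hi : i ∈ missingCoatoms J) (ht : t ∉ missingCoatoms J) {w : ℕ}
    (hw : w ∈ replacements H E (partVertex V E i)) : ContainsADSystem p a d H := by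
  set I := missingCoatoms J
  have hk : 2 * p = k := by simp [← hsum, ha, mul_comm]
  have hit : i ≠ t := fun h => ht (h ▸ hi)
  obtain ⟨X, hX, hwX, hslot⟩ := hV.exists_swap (hsub.trans hH) (by nlinarith) hE
    (not_not.mp (mem_missingCoatoms.not.mp ht)) (mem_replacements.mp hw).1
  let j₀ : Fin p := ⟨0, by omega⟩
  let j₁ : Fin p := ⟨1, by omega⟩
  have hIt : #I ≤ k - 1 := by
    simpa using card_le_card (fun x hx => mem_erase.mpr ⟨fun h => ht (h ▸ hx), mem_univ x⟩ :
      I ⊆ univ.erase t)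
  obtain ⟨c, hc, hc0, hcsum⟩ := exists_sum_eq_of_ne_one a (univ.erase j₀) (fun j _ => (ha j).ge)
    (#I - 1) (by rw [← add_sum_erase _ _ (mem_univ j₀), ha j₀] at hsum; omega)
    (by obtain ⟨m, hm⟩ := hq; omega) (.inl (by obtain ⟨m, hm⟩ := hq; exact ⟨m, by omega⟩))
  obtain ⟨P, hPcard, hPdisj, hPS, hPI⟩ := exists_indexPartition hsum (I := I) (R := {i, t})
    (S := {j₀}) (c := c) (by simp [ha, card_pair hit]) (fun j => (hc j).1)
    (fun j hj => hc0 j (by simp [mem_singleton.mp hj]))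
    (by
      rw [← sum_subset (subset_univ _) fun j _ hj => hc0 j hj, hcsum, sdiff_insert,
        sdiff_singleton_eq_erase, erase_eq_of_notMem ht, card_erase_of_mem hi])
  have hPj₀ : P j₀ = {i, t} := eq_of_subset_of_card_le (hPS j₀ (mem_singleton_self _))
    (by rw [hPcard, ha, card_pair hit])
  refine hV.containsADSystem_of_indexPartition hsub hH hs hpd (by omega) hsum hX hPcard hPdisj
    (S := {j₀}) (j₁ := j₁) (by simp [j₀, j₁]) (fun _ => insert w (E.erase (partVertex V E i)))
    (fun j hj => ?_) (fun j hj j' hj' hjj' => ?_) fun j hj => ?_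
  · rw [mem_singleton.mp hj, hPj₀]
    exact ⟨(mem_replacements.mp hw).2, fun h => hwX (h ▸ mem_insert_self _ _), hslot i hit⟩
  · exact absurd ((mem_singleton.mp hj).trans (mem_singleton.mp hj').symm) hjj'
  · exact compl_mem_of_card_inter_ne_one (by omega) hrank hV.univ_notMem hV.inter_mem
      (card_pos.mp (by rw [hPcard, ha]; omega)) (by rw [hPI j hj]; exact (hc j).2)

end Swap

theorem sum_filter_two_le_add_card_filter_eq_one {p : ℕ} {a : Fin p → ℕ} (ha : ∀ j, 0 < a j) :
    ∑ j ∈ univ.filter (fun j => 2 ≤ a j), a j + #(univ.filter fun j => a j = 1) = ∑ j, a j := by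
  have h1 : univ.filter (fun j => ¬ 2 ≤ a j) = univ.filter fun j => a j = 1 :=
    filter_congr fun j _ => by have := ha j; omega
  rw [← sum_filter_add_sum_filter_not univ (fun j => 2 ≤ a j), h1, card_eq_sum_ones]
  exact congrArg _ (sum_congr rfl fun j hj => (mem_filter.mp hj).2).symm

/-- How many indices of `missingCoatoms J` (there are `q` of them) go to the parts of size at
least two, in counts `c j ≠ 1`, so that the rest fits into the parts of size one. -/
theorem exists_counts_of_not_all_two {p k q : ℕ} {a : Fin p → ℕ} (ha : ∀ j, 0 < a j)
    (hsum : ∑ j, a j = k) (hpk : p < k) (hq : 2 ≤ q) (hqk : q ≤ k)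
    (h : ¬ ((∀ j, a j = 2) ∧ Odd q)) :
    ∃ c : Fin p → ℕ, (∀ j, c j ≤ a j ∧ c j ≠ 1) ∧ 1 ≤ ∑ j, c j ∧ ∑ j, c j ≤ q ∧
      q ≤ ∑ j, c j + #(univ.filter fun j => a j = 1) := by
  set B := univ.filter fun j => 2 ≤ a j
  set m := #(univ.filter fun j => a j = 1)
  have hBm : ∑ j ∈ B, a j + m = k := hsum ▸ sum_filter_two_le_add_card_filter_eq_one ha
  have hB2 : 2 ≤ ∑ j ∈ B, a j := by
    obtain ⟨j, hj⟩ : B.Nonempty := nonempty_of_sum_ne_zero (f := a) (by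
      have : m ≤ p := (card_le_univ _).trans_eq (Fintype.card_fin p)
      omega)
    exact (mem_filter.mp hj).2.trans (single_le_sum (fun _ _ => Nat.zero_le _) hj)
  suffices ∃ C, 2 ≤ C ∧ C ≤ ∑ j ∈ B, a j ∧ C ≤ q ∧ q ≤ C + m ∧
      (Even C ∨ ∃ j ∈ B, 3 ≤ a j) by
    obtain ⟨C, hC2, hCB, hCq, hqC, hpar⟩ := this
    obtain ⟨c, hc, hc0, hcsum⟩ :=
      exists_sum_eq_of_ne_one a B (fun j hj => (mem_filter.mp hj).2) C hCB (by omega) hpar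
    rw [sum_subset (subset_univ B) fun j _ hj => hc0 j hj] at hcsum
    exact ⟨c, hc, by omega, by omega, by omega⟩
  by_cases h3 : ∃ j, 3 ≤ a j
  · obtain ⟨j, hj⟩ := h3
    exact ⟨min q (∑ j ∈ B, a j), by omega, by omega, by omega, by omega,
      .inr ⟨j, mem_filter.mpr ⟨mem_univ j, by omega⟩, hj⟩⟩
  push Not at h3
  have hB : (∑ j ∈ B, a j) % 2 = 0 := by
    rw [sum_congr rfl fun j hj => show a j = 2 by have := (mem_filter.mp hj).2; have := h3 j; omega]
    simp
  simp only [Nat.even_iff]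
  rcases Nat.even_or_odd q with hq2 | hq2
  · rw [Nat.even_iff] at hq2
    exact ⟨min q (∑ j ∈ B, a j), by omega, by omega, by omega, by omega, .inl (by omega)⟩
  -- the parity obstruction forces a part of size one
  obtain ⟨j, hj⟩ : ∃ j, a j ≠ 2 := by by_contra! h2; exact h ⟨h2, hq2⟩
  have hm : 1 ≤ m :=
    card_pos.mpr ⟨j, mem_filter.mpr ⟨mem_univ j, by have := ha j; have := h3 j; omega⟩⟩
  rw [Nat.odd_iff] at hq2
  exact ⟨min (q - 1) (∑ j ∈ B, a j), by omega, by omega, by omega, by omega, .inl (by omega)⟩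

/-- The host is `E` when `exists_counts_of_not_all_two` applies, and a swapped edge otherwise. -/
theorem containsADSystem_of_injOn {n p k d s : ℕ} {a : Fin p → ℕ} {H Hs : Finset (Finset ℕ)}
    {J : Finset (Finset (Fin k))} {V : Fin k → Finset ℕ} (hV : IsHomogeneousPartition n k s Hs J V)
    (hsub : Hs ⊆ H) (hH : H ⊆ powersetCard k (Icc 1 n)) (hs : k * d + 1 ≤ s) (hp : 2 ≤ p)
    (hpd : p ≤ d) (hpk : p < k) (ha : ∀ j, 0 < a j) (hsum : ∑ j, a j = k)
    (hrank : patternRank J = k - 1) (hI : 2 ≤ #(missingCoatoms J)) {E : Finset ℕ} (hE : E ∈ Hs)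
    {T : Finset (Fin k)} (hTI : T ⊆ missingCoatoms J) (hT : #(missingCoatoms J) ≤ #T + 1)
    {w : Fin k → ℕ} (hw : Set.InjOn w T)
    (hwT : ∀ x ∈ T, w x ∈ replacements H E (partVertex V E x)) : ContainsADSystem p a d H := by
  by_cases hT2 : (∀ j, a j = 2) ∧ Odd #(missingCoatoms J)
  · obtain ⟨x, hx⟩ : T.Nonempty := card_pos.mp (by omega)
    obtain ⟨t, ht⟩ : ∃ t, t ∉ missingCoatoms J := by
      by_contra! h
      rw [eq_univ_of_forall h, card_univ, Fintype.card_fin, ← hsum] at hT2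
      obtain ⟨m, hm⟩ := hT2.2
      simp [hT2.1] at hm
      omega
    exact containsADSystem_of_mem_replacements_of_all_two hV hsub hH hs hpd hp hT2.1 hsum hrank
      hT2.2 hE (hTI hx) ht (hwT x hx)
  obtain ⟨c, hc, hc1, hcq, hqc⟩ := exists_counts_of_not_all_two ha hsum hpk hI
    ((card_le_univ _).trans_eq (Fintype.card_fin k)) hT2
  obtain ⟨T₀, hT₀T, hT₀⟩ :=
    exists_subset_card_eq (show #(missingCoatoms J) - ∑ j, c j ≤ #T by omega)
  obtain ⟨S, hS, hST⟩ :=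
    exists_subset_card_eq (show #T₀ ≤ #(univ.filter fun j => a j = 1) by omega)
  obtain ⟨j₁, hj₁⟩ : ∃ j, a j ≠ 1 := by
    by_contra! h
    simp [h] at hsum
    omega
  exact containsADSystem_of_matching hV hsub hH hs hpd (by omega) ha hsum hrank hE
    (hT₀T.trans hTI) (hw.mono hT₀T) (fun x hx => hwT x (hT₀T hx))
    (fun j hj => (mem_filter.mp (hS hj)).2) hST (fun h => hj₁ (mem_filter.mp (hS h)).2) hc
    (by omega)

/-- Let `d ≥ p ≥ 2`, `k > p`, `s ≥ k·d + 1`, `a⃗` positive with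
`Σ a_i = k`. Let `H ⊆ binom([n],k)` contain no `(a⃗,d)`-Δ-system, and let `H*` be an
`s`-homogeneous subgraph of `H` with pattern `J`, where `r(J) = k-1` and `J` has at most
`k-2` sets of size `k-1`. Then `ω_H(E) ≥ k/(k-1)` for every `E ∈ H*`. -/
theorem stmt19 (n p k d s : ℕ) (hp : 2 ≤ p) (hpd : p ≤ d) (hpk : p < k)
    (hs : k * d + 1 ≤ s)
    (a : Fin p → ℕ) (ha : ∀ i, 0 < a i) (hsum : ∑ i, a i = k)
    (H Hstar : Finset (Finset ℕ)) (J : Finset (Finset (Fin k)))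
    (hH : H ⊆ Finset.powersetCard k (Finset.Icc 1 n))
    (hfree : ¬ ContainsADSystem p a d H)
    (hsub : Hstar ⊆ H)
    (hhom : IsHomogeneousWith n k s Hstar J)
    (hrank : patternRank J = k - 1)
    (hJ : (J.filter (fun A => A.card = k - 1)).card ≤ k - 2) :
    ∀ E ∈ Hstar, (k : ℝ) / ((k : ℝ) - 1) ≤ weight k H E := by
  intro E hE
  obtain ⟨V, hV⟩ := hhom.exists_partition
  have hE1 := hV.card_inter E hE
  by_cases hdeg : ∃ s₀ ⊆ missingCoatoms J,
      #(s₀.biUnion fun x => replacements H E (partVertex V E x)) + 1 < #s₀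
  · obtain ⟨s₀, -, hs₀⟩ := hdeg
    refine div_le_weight_of_card_biUnion_replacements_lt
      (fun G hG => (mem_powersetCard.mp (hH hG)).2) (hsub hE) (T := s₀.image (partVertex V E))
      (image_subset_iff.mpr fun x _ => partVertex_mem hE1 x) ?_
    rwa [image_biUnion, card_image_of_injective _ (partVertex_injective hE1 hV.disjoint)]
  push Not at hdeg
  obtain ⟨T, hTI, hT, w, hw, hwT⟩ := exists_injOn_of_card_le_card_biUnion_add _ _ 1 hdeg
  exact absurd (containsADSystem_of_injOn hV hsub hH hs hp hpd hpk ha hsum hrank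
    (two_le_card_missingCoatoms (by omega) hJ) hE hTI hT hw hwT) hfree
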